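/- arXiv:1510.02638 — 3 statements merged into one kernel-verified Lean document; each statement's English description precedes it below -/
import Mathlib

section
/- Let a, b ∈ Homeo({0,1}^ω) be the prefix replacement maps with a² = b³ = 1 satisfying the cylinder containments: [0]a = [11111], [0]b = [1010], [0]b⁻¹ = [110], and for all normal-form words g of length ≥ 2, [0]g ⊆ [111] ∪ [10]. Then for every nontrivial g in ⟨a,b⟩ ≅ C₂ * C₃, the cylinder [0] satisfies [0] ∩ [0]g = ∅; hence C₂ * C₃ is a demonstrative subgroup of Homeo({0,1}^ω) with demonstration set [0]. -/
/-- Cantor space `{0,1}^ω`. -/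
abbrev Cantor : Type := ℕ → Bool

/-- digit 0 -/
def O : Bool := false
/-- digit 1 -/
def I : Bool := true

/-- Append a finite word as a prefix to an infinite sequence. -/
def capp (w : List Bool) (x : Cantor) : Cantor :=
  fun n => if h : n < w.length then w.get ⟨n, h⟩ else x (n - w.length)

/-- The cylinder set `[w]` of sequences with prefix `w`. -/
def Cyl (w : List Bool) : Set Cantor := {x | ∀ i : Fin w.length, x i = w.get i}

/-- A barrier: every infinite sequence has exactly one prefix in `B`. -/
def IsBarrier (B : Finset (List Bool)) : Prop :=
  ∀ x : Cantor, ∃! w, w ∈ B ∧ x ∈ Cyl w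

/-!
Every element of `⟨a, b⟩` is the product of a reduced word in the letters `a, b, b⁻¹`, i.e. one
in which `a` alternates with `b`-letters, since `a² = b³ = 1` lets any other word be shortened. A
single letter maps `[0]` onto a cylinder `[1 …]`, and by hypothesis a longer reduced word maps
`[0]` into `[111] ∪ [10]`; either way the image of `[0]` avoids `[0]`.
-/

section ReducedWord

variable {G : Type*} [Group G] (a b : G)

def IsLetter (x : G) : Prop := x = a ∨ x = b ∨ x = b⁻¹

def Alternating (x y : G) : Prop :=
  ¬(x = a ∧ y = a) ∧ ¬((x = b ∨ x = b⁻¹) ∧ (y = b ∨ y = b⁻¹))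

def IsReducedWord (l : List G) : Prop :=
  (∀ x ∈ l, IsLetter a b x) ∧ l.IsChain (Alternating a b)

variable {a b}

theorem alternating_comm {x y : G} : Alternating a b x y ↔ Alternating a b y x := by
  unfold Alternating
  tauto

theorem IsReducedWord.reverse {l : List G} (hl : IsReducedWord a b l) :
    IsReducedWord a b l.reverse :=
  ⟨fun x hx => hl.1 x (List.mem_reverse.mp hx),
    List.isChain_reverse.mpr (hl.2.imp fun _ _ => alternating_comm.mp)⟩

theorem mul_eq_one_or_of_pow_three (hb : b ^ 3 = 1) {x y : G} (hx : x = b ∨ x = b⁻¹)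
    (hy : y = b ∨ y = b⁻¹) : x * y = 1 ∨ x * y = b ∨ x * y = b⁻¹ := by
  have hbb : b * b = b⁻¹ := eq_inv_of_mul_eq_one_left (by rw [← hb, pow_three, mul_assoc])
  rcases hx with rfl | rfl <;> rcases hy with rfl | rfl
  · exact .inr (.inr hbb)
  · exact .inl (mul_inv_cancel x)
  · exact .inl (inv_mul_cancel y)
  · exact .inr (.inl (by rw [← mul_inv_rev, hbb, inv_inv]))

theorem IsReducedWord.exists_prod_eq_mul (ha : a ^ 2 = 1) (hb : b ^ 3 = 1) (hab : a ≠ b)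
    (habi : a ≠ b⁻¹) {l : List G} (hl : IsReducedWord a b l) {s : G} (hs : IsLetter a b s) :
    ∃ l', IsReducedWord a b l' ∧ l'.prod = s * l.prod := by
  rcases l with _ | ⟨t, rest⟩
  · exact ⟨[s], ⟨by simpa using hs, List.isChain_singleton s⟩, by simp⟩
  have hrest : IsReducedWord a b rest :=
    ⟨fun x hx => hl.1 x (List.mem_cons_of_mem t hx), hl.2.tail⟩
  by_cases hst : Alternating a b s t
  · refine ⟨s :: t :: rest, ⟨?_, hl.2.cons (by simpa using hst)⟩, by simp⟩
    exact List.forall_mem_cons.mpr ⟨hs, hl.1⟩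
  have hsame : (s = a ∧ t = a) ∨ ((s = b ∨ s = b⁻¹) ∧ (t = b ∨ t = b⁻¹)) := by
    unfold Alternating at hst
    tauto
  rcases hsame with ⟨rfl, rfl⟩ | ⟨hsb, htb⟩
  · exact ⟨rest, hrest, by rw [List.prod_cons, ← mul_assoc, ← sq, ha, one_mul]⟩
  rcases mul_eq_one_or_of_pow_three hb hsb htb with hst1 | hu
  · exact ⟨rest, hrest, by rw [List.prod_cons, ← mul_assoc, hst1, one_mul]⟩
  -- `t` and `s * t` are both `b`-letters, so they alternate with the same letters.
  have hne : s * t ≠ a := fun h => by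
    rcases hu with hu | hu
    exacts [hab (h ▸ hu), habi (h ▸ hu)]
  refine ⟨s * t :: rest, ⟨List.forall_mem_cons.mpr ⟨.inr hu, hrest.1⟩, ?_⟩,
    by simp [mul_assoc]⟩
  refine hrest.2.cons fun r hr => ⟨fun h => hne h.1, fun h => ?_⟩
  exact (List.isChain_cons.mp hl.2).1 r hr |>.2 ⟨htb, h.2⟩

theorem exists_isReducedWord_prod_eq (ha : a ^ 2 = 1) (hb : b ^ 3 = 1) (hab : a ≠ b)
    (habi : a ≠ b⁻¹) {g : G} (hg : g ∈ Subgroup.closure {a, b}) :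
    ∃ l, IsReducedWord a b l ∧ l.prod = g := by
  have ha_inv : a⁻¹ = a := inv_eq_of_mul_eq_one_left (by rw [← sq, ha])
  induction hg using Subgroup.closure_induction_left with
  | one => exact ⟨[], ⟨by simp, List.isChain_nil⟩, rfl⟩
  | mul_left x hx y _ ih =>
    obtain ⟨l, hl, rfl⟩ := ih
    refine hl.exists_prod_eq_mul ha hb hab habi ?_
    rcases hx with rfl | rfl
    exacts [.inl rfl, .inr (.inl rfl)]
  | inv_mul_cancel x hx y _ ih =>
    obtain ⟨l, hl, rfl⟩ := ih
    refine hl.exists_prod_eq_mul ha hb hab habi ?_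
    rcases hx with rfl | rfl
    exacts [.inl ha_inv, .inr (.inr rfl)]

end ReducedWord

theorem List.foldl_apply_eq_prod_reverse {α : Type*} (l : List (Equiv.Perm α)) (x : α) :
    l.foldl (fun y g => g y) x = l.reverse.prod x := by
  induction l generalizing x with
  | nil => rfl
  | cons s l ih => simp [ih, List.prod_append]

theorem disjoint_Cyl_cons {c d : Bool} (hcd : c ≠ d) (v w : List Bool) :
    Disjoint (Cyl (c :: v)) (Cyl (d :: w)) :=
  Set.disjoint_left.mpr fun x hv hw => hcd ((hv ⟨0, by simp⟩).symm.trans (hw ⟨0, by simp⟩))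

theorem const_true_mem_Cyl_iff (w : List Bool) :
    (fun _ => true) ∈ Cyl w ↔ ∀ c ∈ w, c = true := by
  simp only [Cyl, Set.mem_ofPred_eq, List.forall_mem_iff_get]
  exact forall_congr' fun _ => eq_comm

theorem demonstration_set_C2C3_general (a b : Equiv.Perm Cantor)
    (ha2 : a ^ 2 = 1) (hb3 : b ^ 3 = 1)
    (h0a : ⇑a '' Cyl [O] = Cyl [I,I,I,I,I])
    (h0b : ⇑b '' Cyl [O] = Cyl [I,O,I,O])
    (h0bi : ⇑b⁻¹ '' Cyl [O] = Cyl [I,I,O])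
    (hnf : ∀ l : List (Equiv.Perm Cantor), 2 ≤ l.length →
      (∀ x ∈ l, x = a ∨ x = b ∨ x = b⁻¹) →
      List.Chain' (fun x y =>
        ¬(x = a ∧ y = a) ∧ ¬((x = b ∨ x = b⁻¹) ∧ (y = b ∨ y = b⁻¹))) l →
      (fun x => l.foldl (fun y g => g y) x) '' Cyl [O] ⊆
        Cyl [I,I,I] ∪ Cyl [I,O]) :
    ∀ g ∈ Subgroup.closure ({a, b} : Set (Equiv.Perm Cantor)), g ≠ 1 →
      Cyl [O] ∩ ⇑g '' Cyl [O] = ∅ := by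
  have hones : (fun _ => true) ∈ ⇑a '' Cyl [O] := by
    simp [h0a, const_true_mem_Cyl_iff, I]
  have hab : a ≠ b := fun h => by
    rw [h, h0b] at hones
    simp [const_true_mem_Cyl_iff, I, O] at hones
  have habi : a ≠ b⁻¹ := fun h => by
    rw [h, h0bi] at hones
    simp [const_true_mem_Cyl_iff, I, O] at hones
  have hO_disj : ∀ w, Disjoint (Cyl [O]) (Cyl (I :: w)) := disjoint_Cyl_cons (by decide) []
  intro g hg hg1
  obtain ⟨l, hl, rfl⟩ := exists_isReducedWord_prod_eq ha2 hb3 hab habi hg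
  rw [← Set.disjoint_iff_inter_eq_empty]
  match l, hl with
  | [], _ => exact absurd List.prod_nil hg1
  | [s], hl =>
    rcases hl.1 s (List.mem_singleton_self s) with rfl | rfl | rfl
    · rw [List.prod_singleton, h0a]; exact hO_disj _
    · rw [List.prod_singleton, h0b]; exact hO_disj _
    · rw [List.prod_singleton, h0bi]; exact hO_disj _
  | s :: t :: rest, hl =>
    have himage := hnf _ (by simp) hl.reverse.1 hl.reverse.2
    simp only [List.foldl_apply_eq_prod_reverse, List.reverse_reverse] at himage
    exact (Set.disjoint_union_right.mpr ⟨hO_disj _, hO_disj _⟩).mono_right himage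

/-- For the prefix replacement maps `a, b` with `a² = b³ = 1`, satisfying
`[0]a = [11111]`, `[0]b = [1010]`, `[0]b⁻¹ = [110]`, and such that every
normal-form word of length ≥ 2 moves `[0]` into `[111] ∪ [10]`, every
nontrivial element `g` of `⟨a, b⟩` satisfies `[0] ∩ [0]g = ∅`; that is,
`⟨a, b⟩ ≅ C₂ * C₃` is demonstrative with demonstration set `[0]`. -/
theorem demonstration_set_C2C3 (a b : Equiv.Perm Cantor)
    (hac : Continuous ⇑a) (hbc : Continuous ⇑b)
    (ha2 : a ^ 2 = 1) (hb3 : b ^ 3 = 1)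
    (h0a : ⇑a '' Cyl [O] = Cyl [I,I,I,I,I])
    (h0b : ⇑b '' Cyl [O] = Cyl [I,O,I,O])
    (h0bi : ⇑b⁻¹ '' Cyl [O] = Cyl [I,I,O])
    (hnf : ∀ l : List (Equiv.Perm Cantor), 2 ≤ l.length →
      (∀ x ∈ l, x = a ∨ x = b ∨ x = b⁻¹) →
      List.Chain' (fun x y =>
        ¬(x = a ∧ y = a) ∧ ¬((x = b ∨ x = b⁻¹) ∧ (y = b ∨ y = b⁻¹))) l →
      (fun x => l.foldl (fun y g => g y) x) '' Cyl [O] ⊆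
        Cyl [I,I,I] ∪ Cyl [I,O]) :
    ∀ g ∈ Subgroup.closure ({a, b} : Set (Equiv.Perm Cantor)), g ≠ 1 →
      Cyl [O] ∩ ⇑g '' Cyl [O] = ∅ :=
  demonstration_set_C2C3_general a b ha2 hb3 h0a h0b h0bi hnf
end

section
/- The free group F₂ on two generators embeds into the free product C₂ * C₃ = ⟨x, y | x² = y³ = 1⟩: the subgroup generated by the commutators [x,y] = x⁻¹y⁻¹xy and [x,y⁻¹] = x⁻¹yxy⁻¹ is free of rank 2. -/
/-- The modular group `C₂ * C₃ = ⟨x, y | x² = y³ = 1⟩`. -/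
abbrev ModGrp : Type := Monoid.Coprod (Multiplicative (ZMod 2)) (Multiplicative (ZMod 3))

/-- The order-2 generator `x` of `C₂ * C₃`. -/
def modX : ModGrp := Monoid.Coprod.inl (Multiplicative.ofAdd (1 : ZMod 2))

/-- The order-3 generator `y` of `C₂ * C₃`. -/
def modY : ModGrp := Monoid.Coprod.inr (Multiplicative.ofAdd (1 : ZMod 3))

open scoped commutatorElement

/-!
`C₂ * C₃` acts by left multiplication on its normal forms, the words alternating between `x` and
`y^{±1}`. With `⁅g, h⁆ = g h g⁻¹ h⁻¹`, the commutators are `⁅x, y^{±1}⁆ = x y^{±1} x y^{∓1}`, with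
inverses `y^{±1} x y^{∓1} x`. Multiplying a normal form by such a word of length four cancels or
merges at most its first two letters, so `⁅x, y^{±1}⁆` sends every word not beginning with
`y^{±1} x` to one beginning with `x y^{±1}`, and its inverse sends every word not beginning with
`x y^{±1}` to one beginning with `y^{±1} x`. These four sets of words are pairwise disjoint, and
the ping-pong lemma shows that the two commutators generate a free group.
-/

open scoped Pointwise

def zmodPowersHom {G : Type*} [Group G] (n : ℕ) (g : G) (hg : g ^ n = 1) :
    Multiplicative (ZMod n) →* G :=
  AddMonoidHom.toMultiplicativeLeft <|
    ZMod.lift n ⟨zmultiplesHom (Additive G) (Additive.ofMul g), by simpa [← ofMul_pow] using hg⟩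

theorem zmodPowersHom_ofAdd_one {G : Type*} [Group G] (n : ℕ) (g : G) (hg : g ^ n = 1) :
    zmodPowersHom n g hg (Multiplicative.ofAdd 1) = g := by
  simp only [zmodPowersHom, AddMonoidHom.coe_toMultiplicativeLeft, Function.comp_apply, toAdd_ofAdd]
  rw [← Int.cast_one, ZMod.lift_coe]
  simp

namespace ModGrp

inductive Letter
  | x
  | y
  | yInv
  deriving DecidableEq

def Letter.isX : Letter → Bool
  | x => true
  | _ => false

def IsReducedWord (l : List Letter) : Prop := l.IsChain fun a b => a.isX ≠ b.isX

def ReducedWord : Type := {l : List Letter // IsReducedWord l}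

def xMul : List Letter → List Letter
  | .x :: t => t
  | l => .x :: l

def yMul : List Letter → List Letter
  | .y :: t => .yInv :: t
  | .yInv :: t => t
  | l => .y :: l

theorem isReducedWord_xMul {l : List Letter} (h : IsReducedWord l) : IsReducedWord (xMul l) := by
  rcases l with _ | ⟨_ | _ | _, t⟩ <;> simp_all [IsReducedWord, xMul, Letter.isX]
  exact h.tail

theorem isReducedWord_yMul {l : List Letter} (h : IsReducedWord l) : IsReducedWord (yMul l) := by
  rcases l with _ | ⟨_ | _ | _, _ | ⟨_ | _ | _, t⟩⟩ <;> simp_all [IsReducedWord, yMul, Letter.isX]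

theorem xMul_xMul {l : List Letter} (h : IsReducedWord l) : xMul (xMul l) = l := by
  rcases l with _ | ⟨_ | _ | _, _ | ⟨_ | _ | _, t⟩⟩ <;> simp_all [IsReducedWord, xMul, Letter.isX]

theorem yMul_yMul_yMul {l : List Letter} (h : IsReducedWord l) : yMul (yMul (yMul l)) = l := by
  rcases l with _ | ⟨_ | _ | _, _ | ⟨_ | _ | _, t⟩⟩ <;> simp_all [IsReducedWord, yMul, Letter.isX]

def xPerm : Equiv.Perm ReducedWord :=
  Function.Involutive.toPerm (fun w => ⟨xMul w.1, isReducedWord_xMul w.2⟩)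
    fun w => Subtype.ext (xMul_xMul w.2)

def yPerm : Equiv.Perm ReducedWord where
  toFun w := ⟨yMul w.1, isReducedWord_yMul w.2⟩
  invFun w := ⟨yMul (yMul w.1), isReducedWord_yMul (isReducedWord_yMul w.2)⟩
  left_inv w := Subtype.ext (yMul_yMul_yMul w.2)
  right_inv w := Subtype.ext (yMul_yMul_yMul w.2)

theorem xPerm_sq : xPerm ^ 2 = 1 :=
  Equiv.ext fun w => Subtype.ext (xMul_xMul w.2)

theorem yPerm_pow_three : yPerm ^ 3 = 1 :=
  Equiv.ext fun w => Subtype.ext (yMul_yMul_yMul w.2)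

def toPerm : ModGrp →* Equiv.Perm ReducedWord :=
  Monoid.Coprod.lift (zmodPowersHom 2 xPerm xPerm_sq) (zmodPowersHom 3 yPerm yPerm_pow_three)

instance : MulAction ModGrp ReducedWord := MulAction.compHom _ toPerm

theorem modX_smul_val (w : ReducedWord) : (modX • w).1 = xMul w.1 := by
  change (toPerm modX w).1 = _
  rw [toPerm, modX, Monoid.Coprod.lift_apply_inl, zmodPowersHom_ofAdd_one]
  rfl

theorem modY_smul_val (w : ReducedWord) : (modY • w).1 = yMul w.1 := by
  change (toPerm modY w).1 = _
  rw [toPerm, modY, Monoid.Coprod.lift_apply_inr, zmodPowersHom_ofAdd_one]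
  rfl

theorem modX_inv : modX⁻¹ = modX := by
  rw [inv_eq_iff_mul_eq_one, modX, ← map_mul, ← ofAdd_add]
  exact map_one _

theorem modY_inv : modY⁻¹ = modY * modY := by
  rw [inv_eq_iff_mul_eq_one, modY, ← map_mul, ← map_mul, ← ofAdd_add, ← ofAdd_add]
  exact map_one _

theorem modX_inv_smul_val (w : ReducedWord) : (modX⁻¹ • w).1 = xMul w.1 := by
  rw [modX_inv, modX_smul_val]

theorem modY_inv_smul_val (w : ReducedWord) : (modY⁻¹ • w).1 = yMul (yMul w.1) := by
  rw [modY_inv, mul_smul, modY_smul_val, modY_smul_val]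

def yLetter (i : Bool) : Letter := if i then .y else .yInv

theorem yLetter_injective : Function.Injective yLetter := by
  decide

theorem yLetter_ne_x (i : Bool) : yLetter i ≠ .x := by
  cases i <;> decide

def xyCommutator (i : Bool) : ModGrp := if i then ⁅modX, modY⁆ else ⁅modX, modY⁻¹⁆

def startsWith (p : List Letter) : Set ReducedWord := {w | p <+: w.1}

theorem mem_startsWith {p : List Letter} {w : ReducedWord} : w ∈ startsWith p ↔ p <+: w.1 :=
  Iff.rfl

theorem disjoint_startsWith {p q : List Letter} (hlen : p.length = q.length) (hne : p ≠ q) :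
    Disjoint (startsWith p) (startsWith q) :=
  Set.disjoint_left.2 fun _ hp hq =>
    hne ((List.prefix_of_prefix_length_le hp hq hlen.le).eq_of_length hlen)

theorem startsWith_x_yLetter_nonempty (i : Bool) : (startsWith [.x, yLetter i]).Nonempty :=
  ⟨⟨[.x, yLetter i], by cases i <;> simp [IsReducedWord, yLetter, Letter.isX]⟩, List.prefix_rfl⟩

-- Both ping-pong inclusions only depend on the first three letters of the word.
theorem xyCommutator_smul_subset (i : Bool) :
    xyCommutator i • (startsWith [yLetter i, .x])ᶜ ⊆ startsWith [.x, yLetter i] := by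
  refine Set.smul_set_subset_iff.2 fun w hw => ?_
  rw [Set.mem_compl_iff, mem_startsWith] at hw
  rw [mem_startsWith]
  cases i <;>
    simp only [xyCommutator, yLetter, commutatorElement_def, mul_smul, inv_inv, modX_smul_val,
      modY_smul_val, modX_inv_smul_val, modY_inv_smul_val, Bool.false_eq_true, if_false,
      if_true] at hw ⊢ <;>
    obtain ⟨l, hl⟩ := w <;> dsimp only [IsReducedWord] at hl hw ⊢ <;>
    rcases l with _ | ⟨_ | _ | _, _ | ⟨_ | _ | _, _ | ⟨_ | _ | _, t⟩⟩⟩ <;>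
    simp_all [xMul, yMul, Letter.isX]

theorem xyCommutator_inv_smul_subset (i : Bool) :
    (xyCommutator i)⁻¹ • (startsWith [.x, yLetter i])ᶜ ⊆ startsWith [yLetter i, .x] := by
  refine Set.smul_set_subset_iff.2 fun w hw => ?_
  rw [Set.mem_compl_iff, mem_startsWith] at hw
  rw [mem_startsWith]
  cases i <;>
    simp only [xyCommutator, yLetter, commutatorElement_def, mul_inv_rev, mul_smul, inv_inv,
      modX_smul_val, modY_smul_val, modX_inv_smul_val, modY_inv_smul_val, Bool.false_eq_true,
      if_false, if_true] at hw ⊢ <;>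
    obtain ⟨l, hl⟩ := w <;> dsimp only [IsReducedWord] at hl hw ⊢ <;>
    rcases l with _ | ⟨_ | _ | _, _ | ⟨_ | _ | _, _ | ⟨_ | _ | _, t⟩⟩⟩ <;>
    simp_all [xMul, yMul, Letter.isX]

end ModGrp

open ModGrp

/-- The free group of rank 2 embeds in `C₂ * C₃ = ⟨x, y | x² = y³ = 1⟩`: the
homomorphism sending the two free generators to the commutators `⁅x, y⁆` and
`⁅x, y⁻¹⁆` is injective. -/
theorem free_group_embeds_C2C3 :
    Function.Injective
      (FreeGroup.lift (fun i : Bool => if i then ⁅modX, modY⁆ else ⁅modX, modY⁻¹⁆)) := by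
  refine FreeGroup.injective_lift_of_ping_pong xyCommutator (fun i => startsWith [.x, yLetter i])
    (fun i => startsWith [yLetter i, .x]) startsWith_x_yLetter_nonempty ?_ ?_ ?_
    xyCommutator_smul_subset xyCommutator_inv_smul_subset
  · exact fun i j hij => disjoint_startsWith rfl (by simpa using yLetter_injective.ne hij)
  · exact fun i j hij => disjoint_startsWith rfl (by simpa using yLetter_injective.ne hij)
  · exact fun i j => disjoint_startsWith rfl (by simp [(yLetter_ne_x j).symm])
end

section
/- A finitely generated group G is finite if and only if its word problem W(G) = {w ∈ Σ* : w represents the identity of G} is a regular language, for Σ a finite generating set closed under inverses. -/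
private lemma theta_cons {α G : Type*} [Group G] (θ : FreeMonoid α →* G) (a : α) (w : List α) :
    θ (FreeMonoid.ofList (a :: w)) = θ (FreeMonoid.of a) * θ (FreeMonoid.ofList w) := by
  rw [show FreeMonoid.ofList (a :: w) = FreeMonoid.of a * FreeMonoid.ofList w from rfl, map_mul]

private lemma theta_append {α G : Type*} [Group G] (θ : FreeMonoid α →* G) (x y : List α) :
    θ (FreeMonoid.ofList (x ++ y)) = θ (FreeMonoid.ofList x) * θ (FreeMonoid.ofList y) := by
  rw [show FreeMonoid.ofList (x ++ y) = FreeMonoid.ofList x * FreeMonoid.ofList y from rfl,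
    map_mul]

private lemma theta_inv_word {α G : Type*} [Group G] (θ : FreeMonoid α →* G)
    (inv : α → α) (hinv : ∀ s, θ (FreeMonoid.of (inv s)) = (θ (FreeMonoid.of s))⁻¹)
    (w : List α) :
    θ (FreeMonoid.ofList ((w.map inv).reverse)) = (θ (FreeMonoid.ofList w))⁻¹ := by
  induction w with
  | nil => simp [show FreeMonoid.ofList ([] : List α) = 1 from rfl]
  | cons a t ih =>
      have : ((a :: t).map inv).reverse = (t.map inv).reverse ++ [inv a] := by simp
      rw [this, theta_append, ih, theta_cons θ a t,
        show FreeMonoid.ofList [inv a] = FreeMonoid.of (inv a) from rfl, hinv, mul_inv_rev]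

/-- **Anisimov's theorem.** A finitely generated group `G` (generated by the
images of a finite alphabet `α` closed under taking inverses) is finite if and
only if its word problem `W(G) = {w ∈ α* : θ(w) = 1}` is a regular language. -/
theorem anisimov {α G : Type*} [Fintype α] [Group G]
    (θ : FreeMonoid α →* G) (hsurj : Function.Surjective θ)
    (inv : α → α) (hinv : ∀ s, θ (FreeMonoid.of (inv s)) = (θ (FreeMonoid.of s))⁻¹) :
    Finite G ↔
      Language.IsRegular {w : List α | θ (FreeMonoid.ofList w) = 1} := by
  constructor
  · intro hG
    obtain ⟨n, ⟨e⟩⟩ := Finite.exists_equiv_fin G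
    refine ⟨Fin n, inferInstance,
      ⟨fun s a => e (e.symm s * θ (FreeMonoid.of a)), e 1, {e 1}⟩, ?_⟩
    set M : DFA α (Fin n) :=
      ⟨fun s a => e (e.symm s * θ (FreeMonoid.of a)), e 1, {e 1}⟩ with hM
    have key : ∀ (w : List α) (g : G), M.evalFrom (e g) w = e (g * θ (FreeMonoid.ofList w)) := by
      intro w
      induction w with
      | nil => intro g; simp [show FreeMonoid.ofList ([] : List α) = 1 from rfl]
      | cons a t ih =>
          intro g
          have : M.evalFrom (e g) (a :: t) = M.evalFrom (e (g * θ (FreeMonoid.of a))) t := by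
            simp [DFA.evalFrom, hM, List.foldl_cons]
          rw [this, ih, theta_cons, mul_assoc]
    ext w
    rw [DFA.mem_accepts]
    show M.evalFrom M.start w ∈ M.accept ↔ _
    have hstart : M.start = e 1 := rfl
    rw [hstart, key w 1, one_mul]
    show e (θ (FreeMonoid.ofList w)) ∈ ({e 1} : Set (Fin n)) ↔ _
    simp [Set.mem_singleton_iff, e.apply_eq_iff_eq, Set.mem_setOf_eq]
    exact Iff.rfl
  · rintro ⟨σ, _, M, hM⟩
    have rep : ∀ g : G, ∃ w : List α, θ (FreeMonoid.ofList w) = g := by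
      intro g
      obtain ⟨x, hx⟩ := hsurj g
      exact ⟨FreeMonoid.toList x, by simpa using hx⟩
    choose w hw using rep
    have hinj : Function.Injective (fun g => M.eval (w g)) := by
      intro g h hgh
      simp only at hgh
      set u := ((w g).map inv).reverse with hu
      have hu1 : θ (FreeMonoid.ofList u) = g⁻¹ := by
        rw [hu, theta_inv_word θ inv hinv, hw]
      have hacc : w g ++ u ∈ M.accepts := by
        rw [hM]
        show θ (FreeMonoid.ofList (w g ++ u)) = 1
        rw [theta_append, hw, hu1, mul_inv_cancel]
      have hacc2 : w h ++ u ∈ M.accepts := by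
        rw [DFA.mem_accepts] at hacc ⊢
        simp only [DFA.eval] at hgh
        rw [DFA.eval, DFA.evalFrom_of_append] at hacc ⊢
        rw [hgh] at hacc
        exact hacc
      rw [hM] at hacc2
      have : θ (FreeMonoid.ofList (w h ++ u)) = 1 := hacc2
      rw [theta_append, hw, hu1] at this
      exact (mul_inv_eq_one.mp this).symm
    exact Finite.of_injective _ hinj
end
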